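/- arXiv:2303.01288 — 2 statements merged into one kernel-verified Lean document; each statement's English description precedes it below -/
import Mathlib

section
/- Fix constants T > 0, q > 0, g₀ > 0. On M = {x ∈ ℝ⁵ : x₅ > 0}, for u ∈ ℝ² define the smooth vector field f_u(x) = (x₃, x₄, T u₁/x₅, T u₂/x₅ − g₀, −q‖u‖). Then for all u, w ∈ ℝ² and all x ∈ M, the Lie bracket satisfies [f_u, f_w](x) = (T(u₁ − w₁)/x₅, T(u₂ − w₂)/x₅, Tq(w₁‖u‖ − u₁‖w‖)/x₅², Tq(w₂‖u‖ − u₂‖w‖)/x₅², 0); in particular its fifth component vanishes and its value depends only on x₅. -/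
/-- The powered-descent vector field `f_u(x) = (x₃, x₄, Tu₁/x₅, Tu₂/x₅ − g₀, −q‖u‖)`
on the state space ℝ⁵ (indices 0..4), with control `u ∈ ℝ²` (Euclidean norm). -/
noncomputable def poweredDescentField (T q g0 : ℝ) (u : EuclideanSpace ℝ (Fin 2)) :
    (Fin 5 → ℝ) → (Fin 5 → ℝ) :=
  fun x => ![x 2, x 3, T * u 0 / x 4, T * u 1 / x 4 - g0, -(q * ‖u‖)]

/-- The Lie bracket `[f,g](x) = Dg(x) f(x) − Df(x) g(x)` of vector fields on ℝ⁵. -/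
noncomputable def lieB (f g : (Fin 5 → ℝ) → (Fin 5 → ℝ)) : (Fin 5 → ℝ) → (Fin 5 → ℝ) :=
  fun x => fderiv ℝ g x (f x) - fderiv ℝ f x (g x)

noncomputable def pdDeriv (T : ℝ) (u : EuclideanSpace ℝ (Fin 2)) (m : ℝ) :
    (Fin 5 → ℝ) →L[ℝ] (Fin 5 → ℝ) :=
  ContinuousLinearMap.pi
    ![ContinuousLinearMap.proj 2, ContinuousLinearMap.proj 3,
      (-(T * u 0) / m ^ 2) • ContinuousLinearMap.proj 4,
      (-(T * u 1) / m ^ 2) • ContinuousLinearMap.proj 4, 0]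

lemma pd_hasFDerivAt (T q g0 : ℝ) (u : EuclideanSpace ℝ (Fin 2)) (x : Fin 5 → ℝ)
    (hx : x 4 ≠ 0) :
    HasFDerivAt (poweredDescentField T q g0 u) (pdDeriv T u (x 4)) x := by
  have h4 : HasFDerivAt (fun y : Fin 5 → ℝ => y 4)
      (ContinuousLinearMap.proj 4 : (Fin 5 → ℝ) →L[ℝ] ℝ) x :=
    (ContinuousLinearMap.proj 4 : (Fin 5 → ℝ) →L[ℝ] ℝ).hasFDerivAt
  have hinv : HasFDerivAt (fun y : Fin 5 → ℝ => (y 4)⁻¹)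
      ((-((x 4) ^ 2)⁻¹) • (ContinuousLinearMap.proj 4 : (Fin 5 → ℝ) →L[ℝ] ℝ)) x :=
    (hasDerivAt_inv hx).comp_hasFDerivAt x h4
  have key : ∀ c : ℝ, HasFDerivAt (fun y : Fin 5 → ℝ => c * (y 4)⁻¹)
      ((-c / (x 4) ^ 2) • (ContinuousLinearMap.proj 4 : (Fin 5 → ℝ) →L[ℝ] ℝ)) x := by
    intro c
    have hs : (-c / (x 4) ^ 2) = c * (-((x 4) ^ 2)⁻¹) := by ring
    rw [hs, ← smul_smul]
    exact hinv.const_mul c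
  apply hasFDerivAt_pi''
  intro i
  rw [pdDeriv, ContinuousLinearMap.proj_pi]
  fin_cases i
  · simpa [poweredDescentField] using
      hasFDerivAt_apply (𝕜 := ℝ) (2 : Fin 5) x
  · simpa [poweredDescentField] using
      hasFDerivAt_apply (𝕜 := ℝ) (3 : Fin 5) x
  · simpa [poweredDescentField, div_eq_mul_inv] using key (T * u 0)
  · simpa [poweredDescentField, div_eq_mul_inv] using (key (T * u 1)).sub_const g0
  · simpa [poweredDescentField] using
      hasFDerivAt_const (-(q * ‖u‖)) x

lemma lieB_pd_eval (T q g0 : ℝ) (u w : EuclideanSpace ℝ (Fin 2)) (x : Fin 5 → ℝ)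
    (hx : 0 < x 4) :
    lieB (poweredDescentField T q g0 u) (poweredDescentField T q g0 w) x =
      ![T * (u 0 - w 0) / x 4, T * (u 1 - w 1) / x 4,
        T * q * (w 0 * ‖u‖ - u 0 * ‖w‖) / (x 4) ^ 2,
        T * q * (w 1 * ‖u‖ - u 1 * ‖w‖) / (x 4) ^ 2, 0] := by
  have hx' : x 4 ≠ 0 := ne_of_gt hx
  have hu := (pd_hasFDerivAt T q g0 u x hx').fderiv
  have hw := (pd_hasFDerivAt T q g0 w x hx').fderiv
  unfold lieB
  rw [hu, hw]
  funext i
  fin_cases i <;>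
    · simp [pdDeriv, poweredDescentField, ContinuousLinearMap.proj]
      try field_simp
      try ring

theorem lie_bracket_poweredDescent (T q g0 : ℝ) (hT : 0 < T) (hq : 0 < q) (hg : 0 < g0)
    (u w : EuclideanSpace ℝ (Fin 2)) (x : Fin 5 → ℝ) (hx : 0 < x 4) :
    lieB (poweredDescentField T q g0 u) (poweredDescentField T q g0 w) x =
      ![T * (u 0 - w 0) / x 4, T * (u 1 - w 1) / x 4,
        T * q * (w 0 * ‖u‖ - u 0 * ‖w‖) / (x 4) ^ 2,
        T * q * (w 1 * ‖u‖ - u 1 * ‖w‖) / (x 4) ^ 2, 0] ∧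
    lieB (poweredDescentField T q g0 u) (poweredDescentField T q g0 w) x 4 = 0 ∧
    ∀ x' : Fin 5 → ℝ, 0 < x' 4 → x' 4 = x 4 →
      lieB (poweredDescentField T q g0 u) (poweredDescentField T q g0 w) x' =
        lieB (poweredDescentField T q g0 u) (poweredDescentField T q g0 w) x := by
  have h := lieB_pd_eval T q g0 u w x hx
  refine ⟨h, by rw [h]; simp, ?_⟩
  intro x' hx' hxx
  rw [lieB_pd_eval T q g0 u w x' hx', h, hxx]
end

section
/- Fix constants T > 0, q > 0, g₀ > 0. On M = {x ∈ ℝ⁵ : x₅ > 0}, for u ∈ ℝ² define f_u(x) = (x₃, x₄, T u₁/x₅, T u₂/x₅ − g₀, −q‖u‖), and set u₁ = (0,0), u₂ = (0,1), u₃ = (1,0), u₄ = (1/√2, 1/√2). Then for every x ∈ M the five vectors (f_{u₁} − f_{u₂})(x), (f_{u₁} − f_{u₃})(x), (f_{u₁} − f_{u₄})(x), [f_{u₁}, f_{u₂}](x), [f_{u₁}, f_{u₃}](x) are linearly independent in ℝ⁵; in particular they span ℝ⁵. -/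
/-- A two-dimensional control vector. -/
noncomputable def ctrl (a b : ℝ) : EuclideanSpace ℝ (Fin 2) :=
  (WithLp.equiv 2 (Fin 2 → ℝ)).symm ![a, b]

open ContinuousLinearMap in
noncomputable def D5 (T : ℝ) (a b : ℝ) (x : Fin 5 → ℝ) : (Fin 5 → ℝ) →L[ℝ] (Fin 5 → ℝ) :=
  pi ![proj 2, proj 3, (-(T*a)/(x 4)^2) • proj 4, (-(T*b)/(x 4)^2) • proj 4, 0]

open ContinuousLinearMap in
lemma div_comp_hasF (T a : ℝ) (x : Fin 5 → ℝ) (hx : x 4 ≠ 0) :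
    HasFDerivAt (fun x : Fin 5 → ℝ => T * a / x 4)
      ((-(T*a)/(x 4)^2) • (proj 4 : (Fin 5 → ℝ) →L[ℝ] ℝ)) x := by
  have h : HasFDerivAt (fun x : Fin 5 → ℝ => x 4) (proj 4 : (Fin 5 → ℝ) →L[ℝ] ℝ) x :=
    (ContinuousLinearMap.proj 4 : (Fin 5 → ℝ) →L[ℝ] ℝ).hasFDerivAt
  have h2 := ((hasDerivAt_inv hx).comp_hasFDerivAt x h).const_mul (T * a)
  have e : ((-(T*a)/(x 4)^2) • (proj 4 : (Fin 5 → ℝ) →L[ℝ] ℝ))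
      = (T*a) • (-(x 4 ^ 2)⁻¹) • (proj 4 : (Fin 5 → ℝ) →L[ℝ] ℝ) := by
    ext y; simp; ring
  rw [e]; simp only [div_eq_mul_inv]; exact h2

lemma ctrl_apply0 (a b : ℝ) : (ctrl a b) 0 = a := by simp [ctrl]
lemma ctrl_apply1 (a b : ℝ) : (ctrl a b) 1 = b := by simp [ctrl]

open ContinuousLinearMap in
lemma pdf_hasFDerivAt (T q g0 a b : ℝ) (x : Fin 5 → ℝ) (hx : x 4 ≠ 0) :
    HasFDerivAt (poweredDescentField T q g0 (ctrl a b)) (D5 T a b x) x := by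
  apply hasFDerivAt_pi''
  intro i
  fin_cases i <;>
    simp only [poweredDescentField, D5, proj_pi, ctrl_apply0, ctrl_apply1,
      Matrix.cons_val_zero, Matrix.cons_val_one, Matrix.head_cons, Matrix.cons_val_two,
      Matrix.tail_cons, Matrix.cons_val_three, Matrix.cons_val_four, Fin.isValue]
  · exact (proj 2 : (Fin 5 → ℝ) →L[ℝ] ℝ).hasFDerivAt
  · exact (proj 3 : (Fin 5 → ℝ) →L[ℝ] ℝ).hasFDerivAt
  · exact div_comp_hasF T a x hx
  · exact (div_comp_hasF T b x hx).sub_const g0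
  · exact hasFDerivAt_const _ _

lemma norm_ctrl (a b : ℝ) : ‖ctrl a b‖ = Real.sqrt (a^2 + b^2) := by
  simp [ctrl, EuclideanSpace.norm_eq, Fin.sum_univ_two, sq_abs]

lemma norm_ctrl00 : ‖ctrl 0 0‖ = 0 := by simp [norm_ctrl]
lemma norm_ctrl01 : ‖ctrl 0 1‖ = 1 := by simp [norm_ctrl]
lemma norm_ctrl10 : ‖ctrl 1 0‖ = 1 := by simp [norm_ctrl]
lemma norm_ctrl_sq2 : ‖ctrl (1 / Real.sqrt 2) (1 / Real.sqrt 2)‖ = 1 := by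
  rw [norm_ctrl]
  have h2 : (1 / Real.sqrt 2)^2 = 1/2 := by
    rw [div_pow, one_pow, Real.sq_sqrt (by norm_num : (2:ℝ) ≥ 0)]
  rw [h2]; norm_num

lemma norm_ctrl_sq2' : ‖ctrl (Real.sqrt 2)⁻¹ (Real.sqrt 2)⁻¹‖ = 1 := by
  rw [show (Real.sqrt 2)⁻¹ = 1 / Real.sqrt 2 by rw [one_div]]
  exact norm_ctrl_sq2

theorem accessibility_unperturbed (T q g0 : ℝ) (hT : 0 < T) (hq : 0 < q) (hg : 0 < g0)
    (x : Fin 5 → ℝ) (hx : 0 < x 4) :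
    LinearIndependent ℝ
      ![poweredDescentField T q g0 (ctrl 0 0) x - poweredDescentField T q g0 (ctrl 0 1) x,
        poweredDescentField T q g0 (ctrl 0 0) x - poweredDescentField T q g0 (ctrl 1 0) x,
        poweredDescentField T q g0 (ctrl 0 0) x -
          poweredDescentField T q g0 (ctrl (1 / Real.sqrt 2) (1 / Real.sqrt 2)) x,
        lieB (poweredDescentField T q g0 (ctrl 0 0)) (poweredDescentField T q g0 (ctrl 0 1)) x,
        lieB (poweredDescentField T q g0 (ctrl 0 0)) (poweredDescentField T q g0 (ctrl 1 0)) x] ∧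
    Submodule.span ℝ
      (Set.range
        ![poweredDescentField T q g0 (ctrl 0 0) x - poweredDescentField T q g0 (ctrl 0 1) x,
          poweredDescentField T q g0 (ctrl 0 0) x - poweredDescentField T q g0 (ctrl 1 0) x,
          poweredDescentField T q g0 (ctrl 0 0) x -
            poweredDescentField T q g0 (ctrl (1 / Real.sqrt 2) (1 / Real.sqrt 2)) x,
          lieB (poweredDescentField T q g0 (ctrl 0 0)) (poweredDescentField T q g0 (ctrl 0 1)) x,
          lieB (poweredDescentField T q g0 (ctrl 0 0)) (poweredDescentField T q g0 (ctrl 1 0)) x])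
      = ⊤ := by
  have hx' : x 4 ≠ 0 := hx.ne'
  have hf : ∀ a b : ℝ, fderiv ℝ (poweredDescentField T q g0 (ctrl a b)) x = D5 T a b x :=
    fun a b => (pdf_hasFDerivAt T q g0 a b x hx').fderiv
  set c := T / x 4 with hc
  set s := T * (1 / Real.sqrt 2) / x 4 with hs
  have h0 : poweredDescentField T q g0 (ctrl 0 0) x - poweredDescentField T q g0 (ctrl 0 1) x
      = ![0, 0, 0, -c, q] := by
    funext j
    fin_cases j <;>
    · simp [poweredDescentField, ctrl_apply0, ctrl_apply1, norm_ctrl00, norm_ctrl01, hc]; try ring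
  have h1 : poweredDescentField T q g0 (ctrl 0 0) x - poweredDescentField T q g0 (ctrl 1 0) x
      = ![0, 0, -c, 0, q] := by
    funext j
    fin_cases j <;>
    · simp [poweredDescentField, ctrl_apply0, ctrl_apply1, norm_ctrl00, norm_ctrl10, hc]; try ring
  have h2 : poweredDescentField T q g0 (ctrl 0 0) x -
        poweredDescentField T q g0 (ctrl (1 / Real.sqrt 2) (1 / Real.sqrt 2)) x
      = ![0, 0, -s, -s, q] := by
    funext j
    fin_cases j <;>
    · simp [poweredDescentField, ctrl_apply0, ctrl_apply1, norm_ctrl00, norm_ctrl_sq2, norm_ctrl_sq2', hs]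
      try ring
  have h3 : lieB (poweredDescentField T q g0 (ctrl 0 0))
        (poweredDescentField T q g0 (ctrl 0 1)) x = ![0, -c, 0, 0, 0] := by
    funext j
    simp only [lieB, hf, Pi.sub_apply]
    fin_cases j <;>
    · simp [D5, poweredDescentField, ctrl_apply0, ctrl_apply1, norm_ctrl00, norm_ctrl01, hc,
        ContinuousLinearMap.pi_apply]
      try ring
  have h4 : lieB (poweredDescentField T q g0 (ctrl 0 0))
        (poweredDescentField T q g0 (ctrl 1 0)) x = ![-c, 0, 0, 0, 0] := by
    funext j
    simp only [lieB, hf, Pi.sub_apply]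
    fin_cases j <;>
    · simp [D5, poweredDescentField, ctrl_apply0, ctrl_apply1, norm_ctrl00, norm_ctrl10, hc,
        ContinuousLinearMap.pi_apply]
      try ring
  rw [h0, h1, h2, h3, h4]
  have hcne : c ≠ 0 := div_ne_zero hT.ne' hx'
  have hsqrt2 : (1:ℝ) < Real.sqrt 2 := by
    have := Real.sq_sqrt (by norm_num : (0:ℝ) ≤ 2)
    nlinarith [Real.sqrt_nonneg 2]
  have h2lt : Real.sqrt 2 < 2 := by
    nlinarith [Real.sq_sqrt (show (0:ℝ) ≤ 2 by norm_num), Real.sqrt_nonneg 2]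
  have hcs : 2 * s ≠ c := by
    rw [hs, hc]
    intro h
    have h2 : Real.sqrt 2 ≠ 0 := by positivity
    field_simp at h
    nlinarith [mul_pos hT hx, h]
  have hli : LinearIndependent ℝ
      ![![0, 0, 0, -c, q], ![0, 0, -c, 0, q], ![0, 0, -s, -s, q],
        ![0, -c, 0, 0, 0], ![-c, 0, 0, 0, 0]] := by
    rw [Fintype.linearIndependent_iff]
    intro g hg i
    have e := fun j => congrFun hg j
    have e0 := e 0; have e1 := e 1; have e2 := e 2; have e3 := e 3; have e4 := e 4
    simp [Fin.sum_univ_five, Matrix.vecHead, Matrix.vecTail] at e0 e1 e2 e3 e4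
    have hg4 : g 4 = 0 := e0.resolve_right hcne
    have hg3 : g 3 = 0 := e1.resolve_right hcne
    have h01 : g 0 = g 1 := by
      have h' : (g 0 - g 1) * c = 0 := by linear_combination e2 - e3
      rcases mul_eq_zero.1 h' with h | h
      · linarith [sub_eq_zero.1 h]
      · exact absurd h hcne
    have hsum : g 0 + g 1 + g 2 = 0 := by
      have h' : (g 0 + g 1 + g 2) * q = 0 := by linear_combination e4
      rcases mul_eq_zero.1 h' with h | h
      · exact h
      · exact absurd h hq.ne'
    have hg2 : g 2 = -2 * g 0 := by rw [h01] at hsum ⊢; linarith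
    have hg0 : g 0 = 0 := by
      rw [hg2] at e3
      have h' : g 0 * (2 * s - c) = 0 := by linear_combination e3
      rcases mul_eq_zero.1 h' with h | h
      · exact h
      · exact absurd (by linarith : 2 * s = c) hcs
    fin_cases i
    · exact hg0
    · show g 1 = 0; rw [← h01]; exact hg0
    · show g 2 = 0; rw [hg2, hg0]; ring
    · exact hg3
    · exact hg4
  refine ⟨hli, ?_⟩
  apply LinearIndependent.span_eq_top_of_card_eq_finrank hli
  simp
end
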